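/- If an ultimately periodic sequence (a_n)_{n≥0} in O_K gives a continued fraction converging to a real quartic irrational ξ that is quadratic over K, then there exist real constants 0 < t_1 ≤ t_2 such that t_1 ≤ |Q_n|·|ξ·Q_n − P_n| ≤ t_2 for all sufficiently large n. -/

import Mathlib

open Filter Topology

/-- Numerator continuants: `cfP a (n+1) = Pₙ`, with `cfP a 0 = P₋₁ = 1`. -/
def cfP {R : Type*} [CommRing R] (a : ℕ → R) : ℕ → R
  | 0 => 1
  | 1 => a 0
  | n + 2 => a (n + 1) * cfP a (n + 1) + cfP a n

/-- Denominator continuants: `cfQ a (n+1) = Qₙ`, with `cfQ a 0 = Q₋₁ = 0`. -/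
def cfQ {R : Type*} [CommRing R] (a : ℕ → R) : ℕ → R
  | 0 => 0
  | 1 => 1
  | n + 2 => a (n + 1) * cfQ a (n + 1) + cfQ a n

/-- The sequence `a` is ultimately periodic. -/
def UltimatelyPeriodic {α : Type*} (a : ℕ → α) : Prop :=
  ∃ N k : ℕ, 1 ≤ k ∧ ∀ n > N, a (n + k) = a n

/-- The continued fraction `[a₀, a₁, …]` converges to `ξ`:
`Qₙ ≠ 0` for all sufficiently large `n` and `Pₙ/Qₙ → ξ`. -/
def CFConvergesTo (a : ℕ → ℝ) (ξ : ℝ) : Prop :=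
  (∃ N, ∀ n ≥ N, cfQ a (n + 1) ≠ 0) ∧
    Tendsto (fun n => cfP a (n + 1) / cfQ a (n + 1)) atTop (nhds ξ)

/-!
Past the preperiod the partial quotients are `k`-periodic, so over one period the continuants
transform by a matrix with entries in `K` and determinant `±1`: `q_{n+k} = A qₙ + B pₙ`.
Because `pₙ / qₙ → ξ ∉ K`, the error `sₙ = ξ qₙ - pₙ` satisfies `s_{n+k} = μ sₙ`; hence
`q_{n+k} = λ qₙ - B sₙ` with `λ = A + B ξ`, and the casoratian gives `λ μ = ±1`.
On a residue class mod `k` this makes `s` geometric with ratio `μ` and `q = α λ^j + β μ^j`.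
Then `s / q → 0` forces `|μ| < 1` and `α ≠ 0`, so `|q| |s| → |α s₀| > 0` on every class.
-/

def IsContinuantRec {R : Type*} [CommRing R] (c u : ℕ → R) : Prop :=
  ∀ n, u (n + 2) = c n * u (n + 1) + u n

/-- The discrete Wronskian of two sequences. -/
def casoratian {R : Type*} [CommRing R] (u v : ℕ → R) (n : ℕ) : R :=
  u (n + 1) * v n - u n * v (n + 1)

section Continuants

variable {R : Type*} [CommRing R] {c u v : ℕ → R}

theorem isContinuantRec_cfP (a : ℕ → R) : IsContinuantRec (fun n => a (n + 1)) (cfP a) :=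
  fun _ => rfl

theorem isContinuantRec_cfQ (a : ℕ → R) : IsContinuantRec (fun n => a (n + 1)) (cfQ a) :=
  fun _ => rfl

theorem map_cfP {S : Type*} [CommRing S] (f : R →+* S) (a : ℕ → R) (n : ℕ) :
    f (cfP a n) = cfP (fun i => f (a i)) n := by
  induction n using Nat.twoStepInduction with
  | zero => simp [cfP]
  | one => simp [cfP]
  | more n ih₀ ih₁ => simp [cfP, ih₀, ih₁]

theorem map_cfQ {S : Type*} [CommRing S] (f : R →+* S) (a : ℕ → R) (n : ℕ) :
    f (cfQ a n) = cfQ (fun i => f (a i)) n := by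
  induction n using Nat.twoStepInduction with
  | zero => simp [cfQ]
  | one => simp [cfQ]
  | more n ih₀ ih₁ => simp [cfQ, ih₀, ih₁]

theorem IsContinuantRec.comp_add (h : IsContinuantRec c u) (m : ℕ) :
    IsContinuantRec (fun n => c (n + m)) (fun n => u (n + m)) := fun n => by
  show u (n + 2 + m) = c (n + m) * u (n + 1 + m) + u (n + m)
  rw [Nat.add_right_comm n 2, Nat.add_right_comm n 1]
  exact h (n + m)

theorem IsContinuantRec.comp_add_of_periodic {k : ℕ} (h : IsContinuantRec c u)
    (hc : ∀ n, c (n + k) = c n) : IsContinuantRec c (fun n => u (n + k)) := fun n => by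
  simpa only [hc] using h.comp_add k n

theorem IsContinuantRec.ext (hu : IsContinuantRec c u) (hv : IsContinuantRec c v)
    (h₀ : u 0 = v 0) (h₁ : u 1 = v 1) : u = v := by
  have key : ∀ n, u n = v n ∧ u (n + 1) = v (n + 1) := by
    intro n
    induction n with
    | zero => exact ⟨h₀, h₁⟩
    | succ n ih => exact ⟨ih.2, by rw [hu, hv, ih.1, ih.2]⟩
  exact funext fun n => (key n).1

theorem casoratian_succ (hu : IsContinuantRec c u) (hv : IsContinuantRec c v) (n : ℕ) :
    casoratian u v (n + 1) = -casoratian u v n := by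
  simp only [casoratian, hu n, hv n]
  ring

theorem casoratian_eq_neg_one_pow_mul (hu : IsContinuantRec c u) (hv : IsContinuantRec c v)
    (n : ℕ) : casoratian u v n = (-1) ^ n * casoratian u v 0 := by
  induction n with
  | zero => simp
  | succ n ih => rw [casoratian_succ hu hv, ih, pow_succ]; ring

theorem casoratian_cfP_cfQ (a : ℕ → R) (n : ℕ) :
    casoratian (cfP a) (cfQ a) n = (-1) ^ (n + 1) := by
  rw [casoratian_eq_neg_one_pow_mul (isContinuantRec_cfP a) (isContinuantRec_cfQ a)]
  simp [casoratian, cfP, cfQ, pow_succ]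

theorem casoratian_mem {S : Type*} [SetLike S R] [SubringClass S R] {s : S}
    (hu : ∀ n, u n ∈ s) (hv : ∀ n, v n ∈ s) (n : ℕ) : casoratian u v n ∈ s :=
  sub_mem (mul_mem (hu _) (hv _)) (mul_mem (hu _) (hv _))

theorem cfP_mem {S : Type*} [SetLike S R] [SubringClass S R] {s : S} {a : ℕ → R}
    (ha : ∀ n, a n ∈ s) (n : ℕ) : cfP a n ∈ s := by
  induction n using Nat.twoStepInduction with
  | zero => exact one_mem s
  | one => exact ha 0
  | more n ih₀ ih₁ => exact add_mem (mul_mem (ha _) ih₁) ih₀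

theorem cfQ_mem {S : Type*} [SetLike S R] [SubringClass S R] {s : S} {a : ℕ → R}
    (ha : ∀ n, a n ∈ s) (n : ℕ) : cfQ a n ∈ s := by
  induction n using Nat.twoStepInduction with
  | zero => exact zero_mem s
  | one => exact one_mem s
  | more n ih₀ ih₁ => exact add_mem (mul_mem (ha _) ih₁) ih₀

end Continuants

/-- Cramer's rule. -/
theorem IsContinuantRec.eq_lincomb {F : Type*} [Field F] {c u p q : ℕ → F}
    (hu : IsContinuantRec c u) (hp : IsContinuantRec c p) (hq : IsContinuantRec c q)
    (hW : casoratian p q 0 ≠ 0) (n : ℕ) :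
    u n = casoratian p u 0 / casoratian p q 0 * q n +
      casoratian u q 0 / casoratian p q 0 * p n := by
  refine congrFun (hu.ext (v := fun n => casoratian p u 0 / casoratian p q 0 * q n +
    casoratian u q 0 / casoratian p q 0 * p n) (fun n => ?_) ?_ ?_) n
  · simp only [hp n, hq n]
    ring
  · simp only [casoratian] at hW ⊢
    field_simp
    ring
  · simp only [casoratian] at hW ⊢
    field_simp
    ring

theorem UltimatelyPeriodic.comp {α β : Type*} {a : ℕ → α} (h : UltimatelyPeriodic a)
    (f : α → β) : UltimatelyPeriodic (fun n => f (a n)) := by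
  obtain ⟨N, k, hk, hper⟩ := h
  exact ⟨N, k, hk, fun n hn => congrArg f (hper n hn)⟩

theorem eq_zero_of_mul_mem_of_notMem {L : Type*} [Field L] {K : Subfield L} {ξ B : L}
    (hξ : ξ ∉ K) (hB : B ∈ K) (h : B * ξ ∈ K) : B = 0 := by
  by_contra hB₀
  exact hξ (by simpa [hB₀] using K.mul_mem (K.inv_mem hB) h)

theorem natDegree_minpoly_le_finrank {L : Type*} [Field L] [CharZero L] (K : Subfield L)
    [FiniteDimensional ℚ K] {ξ : L} (hξ : ξ ∈ K) :
    (minpoly ℚ ξ).natDegree ≤ Module.finrank ℚ K := by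
  have h := minpoly.natDegree_le (A := ℚ) (⟨ξ, hξ⟩ : K)
  rwa [← minpoly.algebraMap_eq (B' := L) Subtype.coe_injective] at h

theorem not_tendsto_of_eventually_le_succ {α : Type*} [TopologicalSpace α] [Preorder α]
    [OrderClosedTopology α] {f : ℕ → α} {a : α} (hlt : ∀ n, a < f n)
    (hmono : ∀ᶠ n in atTop, f n ≤ f (n + 1)) : ¬ Tendsto f atTop (𝓝 a) := by
  intro hf
  obtain ⟨N, hN⟩ := eventually_atTop.1 hmono
  have hmono' : Monotone fun j => f (j + N) := monotone_nat_of_le_succ fun j => by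
    simpa only [Nat.add_right_comm j 1 N] using hN (j + N) (Nat.le_add_left N j)
  exact (hlt _).not_ge (hmono'.ge_of_tendsto (hf.comp (tendsto_add_atTop_nat N)) 0)

theorem eventually_atTop_of_residues {P : ℕ → Prop} {k : ℕ} (hk : 0 < k)
    (h : ∀ r < k, ∀ᶠ j in atTop, P (r + j * k)) : ∀ᶠ n in atTop, P n := by
  have h' : ∀ᶠ j in atTop, ∀ r ∈ Finset.range k, P (r + j * k) :=
    (eventually_all_finset _).2 fun r hr => h r (Finset.mem_range.1 hr)
  obtain ⟨J, hJ⟩ := eventually_atTop.1 h'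
  refine eventually_atTop.2 ⟨J * k, fun n hn => ?_⟩
  rw [← Nat.mod_add_div' n k]
  exact hJ _ ((Nat.le_div_iff_mul_le hk).2 hn) _ (Finset.mem_range.2 (Nat.mod_lt n hk))

theorem exists_bounds_of_tendsto_residues {F : ℕ → ℝ} {k : ℕ} (hk : 0 < k)
    (h : ∀ r, ∃ L, 0 < L ∧ Tendsto (fun j => F (r + j * k)) atTop (𝓝 L)) :
    ∃ t₁ t₂ : ℝ, 0 < t₁ ∧ t₁ ≤ t₂ ∧ ∀ᶠ n in atTop, t₁ ≤ F n ∧ F n ≤ t₂ := by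
  choose L hL hF using h
  have hne : (Finset.range k).Nonempty := ⟨0, Finset.mem_range.2 hk⟩
  set t₁ := (Finset.range k).inf' hne L / 2
  set t₂ := 2 * (Finset.range k).sup' hne L
  have hmin : 0 < (Finset.range k).inf' hne L := (Finset.lt_inf'_iff hne).2 fun i _ => hL i
  have ht₁ : ∀ r < k, t₁ < L r := fun r hr =>
    (half_lt_self hmin).trans_le (Finset.inf'_le L (Finset.mem_range.2 hr))
  have ht₂ : ∀ r < k, L r < t₂ := fun r hr => by
    have := Finset.le_sup' L (Finset.mem_range.2 hr)
    linarith [hL r]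
  refine ⟨t₁, t₂, half_pos hmin, by linarith [ht₁ 0 hk, ht₂ 0 hk], ?_⟩
  refine eventually_atTop_of_residues hk fun r hr => ?_
  exact ((hF r).eventually (Icc_mem_nhds (ht₁ r hr) (ht₂ r hr))).mono fun j hj => hj

theorem eq_pow_mul_of_succ_eq_mul {M : Type*} [Monoid M] {f : ℕ → M} {r : M}
    (h : ∀ j, f (j + 1) = r * f j) (j : ℕ) : f j = r ^ j * f 0 := by
  induction j with
  | zero => simp
  | succ j ih => rw [h, ih, pow_succ', mul_assoc]

section Hyperbolic

variable {X Y : ℕ → ℝ} {lam mu B : ℝ}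

theorem eq_mul_pow_add_mul_pow (hY : ∀ j, Y (j + 1) = mu * Y j)
    (hX : ∀ j, X (j + 1) = lam * X j - B * Y j) (hne : lam ≠ mu) (j : ℕ) :
    X j = (X 0 - B * Y 0 / (lam - mu)) * lam ^ j + B * Y 0 / (lam - mu) * mu ^ j := by
  have hne' : lam - mu ≠ 0 := sub_ne_zero.2 hne
  induction j with
  | zero => simp
  | succ j ih =>
    rw [hX, ih, eq_pow_mul_of_succ_eq_mul hY j]
    field_simp
    ring

theorem abs_lt_one_of_tendsto_div (hY : ∀ j, Y (j + 1) = mu * Y j) (hY₀ : Y 0 ≠ 0)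
    (hX : ∀ j, X (j + 1) = lam * X j - B * Y j) (hlm : |lam * mu| = 1)
    (hB : mu ^ 2 = 1 → B = 0) (hX₀ : ∀ j, X j ≠ 0)
    (hr : Tendsto (fun j => Y j / X j) atTop (𝓝 0)) : |mu| < 1 := by
  by_contra! hmu
  have hmu₀ : mu ≠ 0 := by rintro rfl; norm_num at hmu
  have hYne : ∀ j, Y j ≠ 0 := fun j => by
    rw [eq_pow_mul_of_succ_eq_mul hY j]
    exact mul_ne_zero (pow_ne_zero _ hmu₀) hY₀
  have hlam : |lam| ≤ |mu| := by
    rw [abs_mul] at hlm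
    nlinarith [abs_nonneg lam]
  have hfactor : ∀ᶠ j in atTop, |lam - B * (Y j / X j)| ≤ |mu| := by
    by_cases hB₀ : B = 0
    · simp [hB₀, hlam]
    · have hmu₁ : 1 < |mu| := by
        refine hmu.lt_of_ne fun h => hB₀ (hB ?_)
        rw [← sq_abs, ← h, one_pow]
      have hlt : |lam| < |mu| := by
        rw [abs_mul] at hlm
        nlinarith [abs_nonneg lam]
      have hlim : Tendsto (fun j => |lam - B * (Y j / X j)|) atTop (𝓝 |lam|) := by
        simpa using ((hr.const_mul B).const_sub lam).abs
      exact (hlim.eventually (gt_mem_nhds hlt)).mono fun j hj => hj.le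
  refine not_tendsto_of_eventually_le_succ (f := fun j => |Y j / X j|)
    (fun j => abs_pos.2 (div_ne_zero (hYne j) (hX₀ j))) ?_ (by simpa using hr.abs)
  filter_upwards [hfactor] with j hj
  have hXs : X (j + 1) = X j * (lam - B * (Y j / X j)) := by
    rw [hX]
    field_simp [hX₀ j]
  have hd : 0 < |lam - B * (Y j / X j)| :=
    abs_pos.2 fun h => hX₀ (j + 1) (by rw [hXs, h, mul_zero])
  calc |Y j / X j| = |Y j / X j| * 1 := (mul_one _).symm
    _ ≤ |Y j / X j| * (|mu| / |lam - B * (Y j / X j)|) := by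
      gcongr
      exact (one_le_div hd).2 hj
    _ = |Y (j + 1) / X (j + 1)| := by
      rw [hY, hXs, abs_div, abs_div, abs_mul, abs_mul]
      field_simp

theorem exists_tendsto_abs_mul_abs (hY : ∀ j, Y (j + 1) = mu * Y j) (hY₀ : Y 0 ≠ 0)
    (hX : ∀ j, X (j + 1) = lam * X j - B * Y j) (hlm : |lam * mu| = 1)
    (hB : mu ^ 2 = 1 → B = 0) (hX₀ : ∀ j, X j ≠ 0)
    (hr : Tendsto (fun j => Y j / X j) atTop (𝓝 0)) :
    ∃ L, 0 < L ∧ Tendsto (fun j => |X j| * |Y j|) atTop (𝓝 L) := by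
  have hmu := abs_lt_one_of_tendsto_div hY hY₀ hX hlm hB hX₀ hr
  have hlam : 1 < |lam| := by
    rw [abs_mul] at hlm
    nlinarith [abs_nonneg mu]
  have hmu₀ : mu ≠ 0 := by rintro rfl; simp at hlm
  have hlam₀ : lam ≠ 0 := by rintro rfl; simp at hlm
  have hne : lam ≠ mu := by rintro rfl; linarith
  set β := B * Y 0 / (lam - mu)
  set α := X 0 - β
  have hXf : ∀ j, X j = α * lam ^ j + β * mu ^ j := eq_mul_pow_add_mul_pow hY hX hne
  have hYf := eq_pow_mul_of_succ_eq_mul hY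
  -- if `α = 0` then `Y / X` is a nonzero constant
  have hα : α ≠ 0 := by
    intro hα₀
    have hβ : β ≠ 0 := fun h => hX₀ 0 (by rw [hXf 0, hα₀, h]; ring)
    have hconst : ∀ j, Y j / X j = Y 0 / β := fun j => by
      rw [hXf j, hYf j, hα₀, zero_mul, zero_add]
      field_simp
    have := tendsto_nhds_unique (tendsto_const_nhds.congr fun j => (hconst j).symm) hr
    exact div_ne_zero hY₀ hβ this
  have hprod : ∀ j, |X j| * |Y j| = |α * Y 0 + β * Y 0 * (mu / lam) ^ j| := fun j => by
    have : X j * Y j = (lam * mu) ^ j * (α * Y 0 + β * Y 0 * (mu / lam) ^ j) := by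
      rw [hXf j, hYf j, div_pow, mul_pow]
      field_simp
    rw [← abs_mul, this, abs_mul, abs_pow, hlm, one_pow, one_mul]
  have hq : |mu / lam| < 1 := by
    rw [abs_div, div_lt_one (by linarith)]
    linarith
  refine ⟨|α * Y 0|, abs_pos.2 (mul_ne_zero hα hY₀), ?_⟩
  simp_rw [hprod]
  simpa using (((tendsto_pow_atTop_nhds_zero_of_abs_lt_one hq).const_mul (β * Y 0)).const_add
    (α * Y 0)).abs

end Hyperbolic

section Periodic

variable {K : Subfield ℝ} {c p q : ℕ → ℝ} {k : ℕ} {ξ : ℝ}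

theorem tendsto_error_div (hq₀ : ∀ n, q n ≠ 0)
    (hconv : Tendsto (fun n => p n / q n) atTop (𝓝 ξ)) :
    Tendsto (fun n => (ξ * q n - p n) / q n) atTop (𝓝 0) := by
  have h : Tendsto (fun n => ξ - p n / q n) atTop (𝓝 (ξ - ξ)) := tendsto_const_nhds.sub hconv
  rw [sub_self] at h
  refine h.congr fun n => ?_
  field_simp [hq₀ n]

/-- Writing `sₙ = ξ qₙ - pₙ` and `s_{n+k} = C₁ qₙ + C₂ pₙ`, the ratio `s_{n+k} / q_{n+k}` tends
both to `0` and to `(C₁ + C₂ ξ) / (A + B ξ)`, so `C₁ = -C₂ ξ`. -/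
theorem exists_error_add_eq_mul (hc : ∀ n, c (n + k) = c n) (hp : IsContinuantRec c p)
    (hq : IsContinuantRec c q) (hW : casoratian p q 0 ≠ 0) (hq₀ : ∀ n, q n ≠ 0) (hξ : ξ ∉ K)
    (hconv : Tendsto (fun n => p n / q n) atTop (𝓝 ξ)) {A B : ℝ} (hA : A ∈ K) (hB : B ∈ K)
    (htr : ∀ n, q (n + k) = A * q n + B * p n) :
    ∃ mu, ∀ n, ξ * q (n + k) - p (n + k) = mu * (ξ * q n - p n) := by
  set s := fun n => ξ * q n - p n
  have hs : IsContinuantRec c s := fun n => by simp only [s, hp n, hq n]; ring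
  set C₁ := casoratian p (fun n => s (n + k)) 0 / casoratian p q 0
  set C₂ := casoratian (fun n => s (n + k)) q 0 / casoratian p q 0
  have hlin : ∀ n, s (n + k) = C₁ * q n + C₂ * p n :=
    (hs.comp_add_of_periodic hc).eq_lincomb hp hq hW
  have hden : A + B * ξ ≠ 0 := by
    intro h
    have hB₀ : B = 0 := eq_zero_of_mul_mem_of_notMem hξ hB (by
      rw [eq_neg_of_add_eq_zero_right h]
      exact K.neg_mem hA)
    have hA₀ : A = 0 := by simpa [hB₀] using h
    exact hq₀ k (by simpa [hA₀, hB₀] using htr 0)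
  have hlim : Tendsto (fun n => s (n + k) / q (n + k)) atTop
      (𝓝 ((C₁ + C₂ * ξ) / (A + B * ξ))) := by
    refine (((hconv.const_mul C₂).const_add C₁).div ((hconv.const_mul B).const_add A) hden).congr
      fun n => ?_
    simp only [Pi.div_apply]
    rw [hlin, htr, ← div_div_div_cancel_right₀ (hq₀ n) (C₁ * q n + C₂ * p n)]
    congr 1 <;> rw [add_div, mul_div_cancel_right₀ _ (hq₀ n), mul_div_assoc]
  have hC : C₁ + C₂ * ξ = 0 := by
    have h := tendsto_nhds_unique hlim
      ((tendsto_error_div hq₀ hconv).comp (tendsto_add_atTop_nat k))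
    simpa [hden] using h
  exact ⟨-C₂, fun n => by
    change s (n + k) = _
    rw [hlin]
    linear_combination q n * hC⟩

theorem exists_tendsto_residue_class (hk : 0 < k) (hc : ∀ n, c (n + k) = c n)
    (hp : IsContinuantRec c p) (hq : IsContinuantRec c q) (hpK : ∀ n, p n ∈ K)
    (hqK : ∀ n, q n ∈ K) (hW : casoratian p q 0 ≠ 0) (hq₀ : ∀ n, q n ≠ 0) (hξ : ξ ∉ K)
    (hconv : Tendsto (fun n => p n / q n) atTop (𝓝 ξ)) (r : ℕ) :
    ∃ L, 0 < L ∧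
      Tendsto (fun j => |q (r + j * k)| * |ξ * q (r + j * k) - p (r + j * k)|) atTop (𝓝 L) := by
  obtain ⟨A, hA, B, hB, htr⟩ : ∃ A ∈ K, ∃ B ∈ K, ∀ n, q (n + k) = A * q n + B * p n :=
    ⟨_, div_mem (casoratian_mem hpK (fun n => hqK _) 0) (casoratian_mem hpK hqK 0),
      _, div_mem (casoratian_mem (fun n => hqK _) hqK 0) (casoratian_mem hpK hqK 0),
      (hq.comp_add_of_periodic hc).eq_lincomb hp hq hW⟩
  obtain ⟨mu, hmu⟩ := exists_error_add_eq_mul hc hp hq hW hq₀ hξ hconv hA hB htr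
  set s := fun n => ξ * q n - p n
  set lam := A + B * ξ
  have hqs : ∀ n, q (n + k) = lam * q n - B * s n := fun n => by
    rw [htr]
    ring
  have hlm : lam * mu = (-1) ^ k := by
    have hWk : casoratian p q k = lam * mu * casoratian p q 0 := by
      have e₀ := hqs 0
      have e₁ := hqs 1
      have f₀ := hmu 0
      have f₁ := hmu 1
      simp only [zero_add, Nat.add_comm 1 k] at e₀ e₁ f₀ f₁
      simp only [casoratian]
      linear_combination q (k + 1) * f₀ - q k * f₁ + mu * s 0 * e₁ - mu * s 1 * e₀
    exact mul_right_cancel₀ hW (hWk.symm.trans (casoratian_eq_neg_one_pow_mul hp hq k))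
  -- if `mu = ±1` then `lam = ±1 ∈ K`, and `lam = A + B ξ` with `ξ ∉ K` forces `B = 0`
  have hB₀ : mu ^ 2 = 1 → B = 0 := fun hmu₂ => by
    have hmuK : mu ∈ K := by
      rcases sq_eq_one_iff.1 hmu₂ with h | h <;> rw [h]
      exacts [K.one_mem, K.neg_mem K.one_mem]
    refine eq_zero_of_mul_mem_of_notMem hξ hB ?_
    have : B * ξ = (-1) ^ k * mu - A := by linear_combination (-lam) * hmu₂ + mu * hlm
    rw [this]
    exact K.sub_mem (K.mul_mem (K.pow_mem (K.neg_mem K.one_mem) k) hmuK) hA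
  have hs₀ : ∀ n, s n ≠ 0 := fun n h => hq₀ n <| eq_zero_of_mul_mem_of_notMem hξ (hqK n) <| by
    rw [mul_comm, sub_eq_zero.1 h]
    exact hpK n
  have hidx : ∀ j, r + (j + 1) * k = r + j * k + k := fun j => by ring
  have hmono : Tendsto (fun j => r + j * k) atTop atTop :=
    tendsto_atTop_mono (fun j => le_add_left (Nat.le_mul_of_pos_right j hk)) tendsto_id
  exact exists_tendsto_abs_mul_abs (X := fun j => q (r + j * k)) (Y := fun j => s (r + j * k))
    (fun j => by simp only [hidx]; exact hmu _) (hs₀ _)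
    (fun j => by simp only [hidx]; exact hqs _) (by rw [hlm, abs_pow, abs_neg, abs_one, one_pow])
    hB₀ (fun j => hq₀ _) ((tendsto_error_div hq₀ hconv).comp hmono)

theorem exists_bounds_of_ultimatelyPeriodic (K : Subfield ℝ) {a : ℕ → ℝ} (haK : ∀ n, a n ∈ K)
    (hper : UltimatelyPeriodic a) {ξ : ℝ} (hξ : ξ ∉ K) (hconv : CFConvergesTo a ξ) :
    ∃ t₁ t₂ : ℝ, 0 < t₁ ∧ t₁ ≤ t₂ ∧
      ∀ᶠ n in atTop, t₁ ≤ |cfQ a n| * |ξ * cfQ a n - cfP a n| ∧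
        |cfQ a n| * |ξ * cfQ a n - cfP a n| ≤ t₂ := by
  obtain ⟨Np, k, hk, hperk⟩ := hper
  obtain ⟨⟨N₀, hq₀⟩, hlim⟩ := hconv
  set M := Np + N₀ + 1
  have hc : ∀ n, a (n + k + M + 1) = a (n + M + 1) := fun n => by
    rw [show n + k + M + 1 = n + M + 1 + k by ring]
    exact hperk _ (by omega)
  have hW : casoratian (fun n => cfP a (n + M)) (fun n => cfQ a (n + M)) 0 ≠ 0 := by
    rw [show casoratian (fun n => cfP a (n + M)) (fun n => cfQ a (n + M)) 0 =
      casoratian (cfP a) (cfQ a) M by simp [casoratian, Nat.add_comm 1 M], casoratian_cfP_cfQ]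
    exact pow_ne_zero _ (neg_ne_zero.2 one_ne_zero)
  have hqM : ∀ n, cfQ a (n + M) ≠ 0 := fun n => hq₀ (n + (Np + N₀)) (by omega)
  have hconvM : Tendsto (fun n => cfP a (n + M) / cfQ a (n + M)) atTop (𝓝 ξ) :=
    hlim.comp (tendsto_add_atTop_nat (Np + N₀))
  have hclass := exists_tendsto_residue_class hk hc ((isContinuantRec_cfP a).comp_add M)
    ((isContinuantRec_cfQ a).comp_add M) (fun n => cfP_mem haK _) (fun n => cfQ_mem haK _) hW hqM
    hξ hconvM
  obtain ⟨t₁, t₂, ht₁, ht₁₂, hev⟩ := exists_bounds_of_tendsto_residues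
    (F := fun m => |cfQ a (m + M)| * |ξ * cfQ a (m + M) - cfP a (m + M)|) hk hclass
  refine ⟨t₁, t₂, ht₁, ht₁₂, ?_⟩
  filter_upwards [(tendsto_sub_atTop_nat M).eventually hev, eventually_ge_atTop M] with n hn hnM
  rwa [Nat.sub_add_cancel hnM] at hn

theorem Qn_xi_error_two_sided_bound_general
    (K : Subfield ℝ) (hK : Module.finrank ℚ K = 2)
    (a : ℕ → K)
    (hper : UltimatelyPeriodic a)
    (ξ : ℝ) (hquartic : (minpoly ℚ ξ).natDegree = 4)
    (hconv : CFConvergesTo (fun n => (a n : ℝ)) ξ) :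
    ∃ t₁ t₂ : ℝ, 0 < t₁ ∧ t₁ ≤ t₂ ∧ ∃ N : ℕ, ∀ n ≥ N,
      t₁ ≤ |(↑(cfQ a (n + 1)) : ℝ)| * |ξ * (↑(cfQ a (n + 1)) : ℝ) - (↑(cfP a (n + 1)) : ℝ)| ∧
      |(↑(cfQ a (n + 1)) : ℝ)| * |ξ * (↑(cfQ a (n + 1)) : ℝ) - (↑(cfP a (n + 1)) : ℝ)| ≤ t₂ := by
  have : FiniteDimensional ℚ K := .of_finrank_pos (by omega)
  have hξ : ξ ∉ K := fun h => by
    have := natDegree_minpoly_le_finrank K h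
    omega
  obtain ⟨t₁, t₂, ht₁, ht₁₂, hev⟩ :=
    exists_bounds_of_ultimatelyPeriodic K (fun n => (a n).2) (hper.comp _) hξ hconv
  obtain ⟨N, hN⟩ := eventually_atTop.1 hev
  refine ⟨t₁, t₂, ht₁, ht₁₂, N, fun n hn => ?_⟩
  rw [show ((cfP a (n + 1) : K) : ℝ) = _ from map_cfP K.subtype a (n + 1),
    show ((cfQ a (n + 1) : K) : ℝ) = _ from map_cfQ K.subtype a (n + 1)]
  exact hN (n + 1) (by omega)

/-- for a convergent ultimately periodic expansion of a quartic irrational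
quadratic over `K`, `|Qₙ|·|ξQₙ − Pₙ|` is eventually bounded above and below by positive
constants. -/
theorem Qn_xi_error_two_sided_bound
    (K : Subfield ℝ) (hK : Module.finrank ℚ K = 2)
    (a : ℕ → K) (ha : ∀ n, IsIntegral ℤ (a n))
    (hper : UltimatelyPeriodic a)
    (ξ : ℝ) (hquartic : (minpoly ℚ ξ).natDegree = 4)
    (hquad : ∃ A B C : K, IsIntegral ℤ A ∧ IsIntegral ℤ B ∧ IsIntegral ℤ C ∧ A ≠ 0 ∧
      (↑A : ℝ) * ξ ^ 2 + (↑B : ℝ) * ξ + (↑C : ℝ) = 0)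
    (hconv : CFConvergesTo (fun n => (a n : ℝ)) ξ) :
    ∃ t₁ t₂ : ℝ, 0 < t₁ ∧ t₁ ≤ t₂ ∧ ∃ N : ℕ, ∀ n ≥ N,
      t₁ ≤ |(↑(cfQ a (n + 1)) : ℝ)| * |ξ * (↑(cfQ a (n + 1)) : ℝ) - (↑(cfP a (n + 1)) : ℝ)| ∧
      |(↑(cfQ a (n + 1)) : ℝ)| * |ξ * (↑(cfQ a (n + 1)) : ℝ) - (↑(cfP a (n + 1)) : ℝ)| ≤ t₂ :=
  Qn_xi_error_two_sided_bound_general K hK a hper ξ hquartic hconv
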